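/- Let (A,B) and (A′,B′) be as in the dual column simulation, let 0 ≤ ε < 1/(5n), and let (x*,y*) be an ε-WSNE of (A′,B′). Then for each row i < k of A, if P(cb₁ⁱ) > 0 and P(rb₁ⁱ) + P(rb₂ⁱ) > 0, then y*_{5i+1} + y*_{5i+2} − ε ≤ y*_{5i} ≤ y*_{5i+1} + y*_{5i+2} + ε. -/

import Mathlib

open Finset
open scoped Classical

/-- `(x, y)` is an `ε`-well-supported Nash equilibrium of the bimatrix game with
`nr` rows, `nc` columns and payoff matrices `A` (row player) and `B` (column player). -/
def IsWSNE (nr nc : ℕ) (A B : ℕ → ℕ → ℝ) (x y : ℕ → ℝ) (ε : ℝ) : Prop :=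
  (∀ i, 0 ≤ x i) ∧ (∀ i, nr ≤ i → x i = 0) ∧ (∑ i ∈ range nr, x i = 1) ∧
  (∀ j, 0 ≤ y j) ∧ (∀ j, nc ≤ j → y j = 0) ∧ (∑ j ∈ range nc, y j = 1) ∧
  (∀ i < nr, 0 < x i → ∀ i' < nr,
    ∑ j ∈ range nc, A i j * y j ≥ ∑ j ∈ range nc, A i' j * y j - ε) ∧
  (∀ j < nc, 0 < y j → ∀ j' < nc,
    ∑ i ∈ range nr, x i * B i j ≥ ∑ i ∈ range nr, x i * B i j' - ε)

/-- The column requirement of a stage 2 game: at most four non-zero entries, all in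
`{1,2}`, with at most one `2`. -/
def Stage2Col (nr : ℕ) (col : ℕ → ℝ) : Prop :=
  (∀ i < nr, col i ∈ ({0, 1, 2} : Set ℝ)) ∧
  ((range nr).filter fun i => col i ≠ 0).card ≤ 4 ∧
  ((range nr).filter fun i => col i = 2).card ≤ 1

/-- The row requirement of a stage 2 game: either (i) at most three entries `1`,
or (ii) a single `2` with at most one `1`, or (iii) exactly two entries `2` (all
remaining entries are `0`). -/
def Stage2Row (nc : ℕ) (row : ℕ → ℝ) : Prop :=
  ((∀ j < nc, row j = 0 ∨ row j = 1) ∧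
    ((range nc).filter fun j => row j = 1).card ≤ 3) ∨
  ((((range nc).filter fun j => row j = 2).card = 1) ∧
    ((range nc).filter fun j => row j = 1).card ≤ 1 ∧
    ∀ j < nc, row j ∈ ({0, 1, 2} : Set ℝ)) ∨
  ((((range nc).filter fun j => row j = 2).card = 2) ∧
    ∀ j < nc, row j ∈ ({0, 2} : Set ℝ))

/-- `(A, B)` (with `nr` rows and `nc` columns) is a stage 2 game. -/
def Stage2Game (nr nc : ℕ) (A B : ℕ → ℕ → ℝ) : Prop :=
  (∀ j < nc, Stage2Col nr (fun i => A i j)) ∧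
  (∀ i < nr, Stage2Row nc (fun j => A i j)) ∧
  (∀ i < nr, Stage2Col nc (fun j => B i j)) ∧
  (∀ j < nc, Stage2Row nr (fun i => B i j)) ∧
  (∀ i < nr, ((range nc).filter fun j => A i j = 2).card = 2 →
    ∀ j < nc, A i j = 2 → ((range nr).filter fun r => A r j = 1).card = 1) ∧
  (∀ j < nc, ((range nr).filter fun i => B i j = 2).card = 2 →
    ∀ i < nr, B i j = 2 → ((range nc).filter fun c => B i c = 1).card = 1)

/-- Input assumptions of the dual column simulation: `(A, B)` is a stage 2 game
with at most `n` rows and columns, entries in `[0,2]`, every row and column with an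
entry `≥ 1`, whose rows with exactly two `2`s are exactly the rows `i < k`, with
row `i < k` having its two `2`s in columns `2i` and `2i+1`, and with column `2i`
(resp. `2i+1`) containing exactly one entry `1`. -/
def DcsInput (n nr nc k : ℕ) (A B : ℕ → ℕ → ℝ) : Prop :=
  nr ≤ n ∧ nc ≤ n ∧ k ≤ nr ∧ 2*k ≤ nc ∧
  Stage2Game nr nc A B ∧
  (∀ i < nr, ∀ j < nc, 0 ≤ A i j ∧ A i j ≤ 2) ∧
  (∀ i < nr, ∀ j < nc, 0 ≤ B i j ∧ B i j ≤ 2) ∧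
  (∀ i < nr, ∃ j < nc, 1 ≤ A i j) ∧ (∀ j < nc, ∃ i < nr, 1 ≤ A i j) ∧
  (∀ i < nr, ∃ j < nc, 1 ≤ B i j) ∧ (∀ j < nc, ∃ i < nr, 1 ≤ B i j) ∧
  (∀ i < k, A i (2*i) = 2 ∧ A i (2*i+1) = 2 ∧
    (∀ j < nc, A i j = 2 → j = 2*i ∨ j = 2*i+1)) ∧
  (∀ i, k ≤ i → i < nr → ((range nc).filter fun j => A i j = 2).card ≠ 2) ∧
  (∀ i < k, ((range nr).filter fun r => A r (2*i) = 1).card = 1 ∧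
            ((range nr).filter fun r => A r (2*i+1) = 1).card = 1)

/-- The row player's payoff matrix `A'` of the dual column simulation.  It has
`4k + nr` rows and `3k + nc` columns.  For `i < k` the blocks `(rb₁ⁱ, cb₁ⁱ)` and
`(rb₂ⁱ, cb₁ⁱ)` both equal `S = [[1,0,0],[0,1,1]]`, the blocks `(rb₁ⁱ, cb₂ⁱ)` and
`(rb₂ⁱ, cb₃ⁱ)` are all ones, and the block `(rb_e, cb₁ⁱ)` equals
`encode(A_{2i}, A_{2i+1})` (a `2` in row `i` of the first column, a `1` in the
second (resp. third) column in the unique row where column `2i` (resp. `2i+1`) of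
`A` equals `1`).  Columns `c ≥ 5k` restricted to `rb_e` equal columns
`A_{2k}, …, A_{nc-1}`; all other entries are `0`. -/
noncomputable def dcsA (k : ℕ) (A : ℕ → ℕ → ℝ) : ℕ → ℕ → ℝ := fun r c =>
  if r < 4*k then
    if c = 5*(r/4) then (if r % 2 = 0 then 1 else 0)
    else if c = 5*(r/4) + 1 ∨ c = 5*(r/4) + 2 then (if r % 2 = 1 then 1 else 0)
    else if c = 5*(r/4) + 3 then (if r % 4 < 2 then 1 else 0)
    else if c = 5*(r/4) + 4 then (if 2 ≤ r % 4 then 1 else 0)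
    else 0
  else
    if c < 5*k then
      (if c % 5 = 0 then (if r - 4*k = c/5 then 2 else 0)
       else if c % 5 = 1 then (if A (r - 4*k) (2*(c/5)) = 1 then 1 else 0)
       else if c % 5 = 2 then (if A (r - 4*k) (2*(c/5)+1) = 1 then 1 else 0)
       else 0)
    else A (r - 4*k) (c - 3*k)

/-- The column player's payoff matrix `B'` of the dual column simulation: for
`i < k` the block `(rb₁ⁱ, cb₁ⁱ)` equals `T₁ = [[0,1,0],[1,0,0]]`, the block
`(rb₂ⁱ, cb₁ⁱ)` equals `T₂ = [[0,0,1],[1,0,0]]`, the block `(rb_e, cb₂ⁱ)` equals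
column `B_{2i}` and the block `(rb_e, cb₃ⁱ)` equals column `B_{2i+1}`.  Columns
`c ≥ 5k` restricted to `rb_e` equal columns `B_{2k}, …, B_{nc-1}`; all other
entries are `0`. -/
noncomputable def dcsB (k : ℕ) (B : ℕ → ℕ → ℝ) : ℕ → ℕ → ℝ := fun r c =>
  if r < 4*k then
    if r % 4 = 0 then (if c = 5*(r/4) + 1 then 1 else 0)
    else if r % 4 = 2 then (if c = 5*(r/4) + 2 then 1 else 0)
    else (if c = 5*(r/4) then 1 else 0)
  else
    if c < 5*k then
      (if c % 5 = 3 then B (r - 4*k) (2*(c/5))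
       else if c % 5 = 4 then B (r - 4*k) (2*(c/5)+1)
       else 0)
    else B (r - 4*k) (c - 3*k)

/-
In `B'`, column `5i` pays the row player's weight on the second rows `4i+1, 4i+3` of the
two row blocks, and columns `5i+1`, `5i+2` pay the weight on the first rows `4i`, `4i+2`.
Conversely, in `A'` the second row of each block beats the first one by exactly
`y_{5i+1} + y_{5i+2} - y_{5i}`. Every row of `B'` has an entry `≥ 1`, so some column pays
at least `1/(3k+nc) > ε`; hence a column in the support of `y*` pays something, i.e. the
row player uses one of the rows it rewards, and the well-supported condition for that
row bounds `y_{5i+1} + y_{5i+2} - y_{5i}` by `ε` on the corresponding side.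
-/

def rowPayoff (nc : ℕ) (A : ℕ → ℕ → ℝ) (y : ℕ → ℝ) (i : ℕ) : ℝ :=
  ∑ j ∈ range nc, A i j * y j

def colPayoff (nr : ℕ) (B : ℕ → ℕ → ℝ) (x : ℕ → ℝ) (j : ℕ) : ℝ :=
  ∑ i ∈ range nr, x i * B i j

lemma mul_lt_one_of_le_of_lt_one_div {m N ε : ℝ} (hm : 0 ≤ m) (hmN : m ≤ N)
    (hε : ε < 1 / N) : m * ε < 1 := by
  rcases le_or_gt ε 0 with hε0 | hε0
  · linarith [mul_nonpos_of_nonneg_of_nonpos hm hε0]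
  have hN : 0 < N := by
    by_contra! hN
    linarith [one_div_nonpos.mpr hN]
  calc m * ε ≤ N * ε := by gcongr
    _ < N * (1 / N) := by gcongr
    _ = 1 := mul_one_div_cancel hN.ne'

namespace IsWSNE

variable {nr nc : ℕ} {A B : ℕ → ℕ → ℝ} {x y : ℕ → ℝ} {ε : ℝ}

lemma rowPayoff_sub_le (h : IsWSNE nr nc A B x y ε) {i i' : ℕ} (hi : i < nr) (hx : 0 < x i)
    (hi' : i' < nr) : rowPayoff nc A y i' - ε ≤ rowPayoff nc A y i :=
  h.2.2.2.2.2.2.1 i hi hx i' hi'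

lemma colPayoff_sub_le (h : IsWSNE nr nc A B x y ε) {j j' : ℕ} (hj : j < nc) (hy : 0 < y j)
    (hj' : j' < nc) : colPayoff nr B x j' - ε ≤ colPayoff nr B x j :=
  h.2.2.2.2.2.2.2 j hj hy j' hj'

lemma x_nonneg (h : IsWSNE nr nc A B x y ε) (i : ℕ) : 0 ≤ x i := h.1 i

lemma y_nonneg (h : IsWSNE nr nc A B x y ε) (j : ℕ) : 0 ≤ y j := h.2.2.2.1 j

lemma eps_nonneg (h : IsWSNE nr nc A B x y ε) : 0 ≤ ε := by
  obtain ⟨i, hi, hx⟩ : ∃ i ∈ range nr, (0 : ℝ) < x i :=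
    exists_lt_of_sum_lt (by simp only [sum_const_zero, h.2.2.1, zero_lt_one])
  linarith [h.rowPayoff_sub_le (mem_range.mp hi) hx (mem_range.mp hi)]

lemma one_le_sum_colPayoff (h : IsWSNE nr nc A B x y ε)
    (hB : ∀ r < nr, 1 ≤ ∑ c ∈ range nc, B r c) : 1 ≤ ∑ c ∈ range nc, colPayoff nr B x c := by
  calc (1 : ℝ) = ∑ r ∈ range nr, x r * 1 := by simpa using h.2.2.1.symm
    _ ≤ ∑ r ∈ range nr, x r * ∑ c ∈ range nc, B r c :=
        sum_le_sum fun r hr => mul_le_mul_of_nonneg_left (hB r (mem_range.mp hr)) (h.x_nonneg r)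
    _ = ∑ c ∈ range nc, colPayoff nr B x c := by
        simp only [colPayoff, mul_sum]
        exact sum_comm

lemma colPayoff_pos (h : IsWSNE nr nc A B x y ε)
    (hB : ∀ r < nr, 1 ≤ ∑ c ∈ range nc, B r c) (hε : nc * ε < 1) {j : ℕ} (hj : j < nc)
    (hy : 0 < y j) : 0 < colPayoff nr B x j := by
  by_contra! hj0
  have hle : ∑ c ∈ range nc, colPayoff nr B x c ≤ ∑ _c ∈ range nc, ε :=
    sum_le_sum fun c hc => by linarith [h.colPayoff_sub_le hj hy (mem_range.mp hc)]
  rw [sum_const, card_range, nsmul_eq_mul] at hle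
  linarith [h.one_le_sum_colPayoff hB]

end IsWSNE

section DualColumnSimulation

variable {k nr nc : ℕ} {A B : ℕ → ℕ → ℝ} {i b : ℕ}

lemma dcsB_nonneg (h2k : 2*k ≤ nc) (hB : ∀ r < nr, ∀ c < nc, 0 ≤ B r c) {r c : ℕ}
    (hr : r < 4*k+nr) (hc : c < 3*k+nc) : 0 ≤ dcsB k B r c := by
  unfold dcsB
  split_ifs <;> first | exact hB _ (by omega) _ (by omega) | norm_num

lemma exists_one_le_dcsB (h2k : 2*k ≤ nc) (hB : ∀ r < nr, ∃ c < nc, 1 ≤ B r c) {r : ℕ}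
    (hr : r < 4*k+nr) : ∃ c < 3*k+nc, 1 ≤ dcsB k B r c := by
  by_cases hrk : r < 4*k
  · refine ⟨if r % 4 = 0 then 5*(r/4)+1 else if r % 4 = 2 then 5*(r/4)+2 else 5*(r/4),
      by split_ifs <;> omega, ?_⟩
    unfold dcsB
    split_ifs <;> first | omega | norm_num
  obtain ⟨j, hj, hBj⟩ := hB (r - 4*k) (by omega)
  -- column `j < 2k` of `B` is copied to column `5(j/2) + 3 + j % 2` of `B'`
  refine ⟨if j < 2*k then 5*(j/2) + 3 + j % 2 else 3*k + j, by split_ifs <;> omega, ?_⟩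
  unfold dcsB
  split_ifs <;> first | omega | (convert hBj using 2; omega)

lemma one_le_sum_dcsB (h2k : 2*k ≤ nc) (hB₀ : ∀ r < nr, ∀ c < nc, 0 ≤ B r c)
    (hB : ∀ r < nr, ∃ c < nc, 1 ≤ B r c) {r : ℕ} (hr : r < 4*k+nr) :
    1 ≤ ∑ c ∈ range (3*k+nc), dcsB k B r c := by
  obtain ⟨c, hc, hBc⟩ := exists_one_le_dcsB h2k hB hr
  exact hBc.trans <| single_le_sum (fun c' hc' => dcsB_nonneg h2k hB₀ hr (mem_range.mp hc'))
    (mem_range.mpr hc)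

lemma colPayoff_dcsB_five_mul (hi : i < k) (x : ℕ → ℝ) :
    colPayoff (4*k+nr) (dcsB k B) x (5*i) = x (4*i+1) + x (4*i+3) := by
  have hB : ∀ r, dcsB k B r (5*i) =
      (if r = 4*i+1 then 1 else 0) + (if r = 4*i+3 then 1 else 0) := by
    intro r
    unfold dcsB
    split_ifs <;> norm_num at * <;> omega
  simp only [colPayoff, hB, mul_add, mul_ite, mul_one, mul_zero, sum_add_distrib, sum_ite_eq',
    mem_range]
  rw [if_pos (by omega), if_pos (by omega)]

lemma colPayoff_dcsB_five_mul_add_one (hi : i < k) (hb : b < 2) (x : ℕ → ℝ) :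
    colPayoff (4*k+nr) (dcsB k B) x (5*i+1+b) = x (4*i+2*b) := by
  have hB : ∀ r, dcsB k B r (5*i+1+b) = if r = 4*i+2*b then 1 else 0 := by
    intro r
    unfold dcsB
    split_ifs <;> norm_num at * <;> omega
  simp only [colPayoff, hB, mul_ite, mul_one, mul_zero, sum_ite_eq', mem_range]
  rw [if_pos (by omega)]

lemma rowPayoff_dcsA_four_mul (h2k : 2*k ≤ nc) (hi : i < k) (hb : b < 2) (y : ℕ → ℝ) :
    rowPayoff (3*k+nc) (dcsA k A) y (4*i+2*b) = y (5*i) + y (5*i+3+b) := by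
  have hA : ∀ j, dcsA k A (4*i+2*b) j =
      (if j = 5*i then 1 else 0) + (if j = 5*i+3+b then 1 else 0) := by
    intro j
    simp only [dcsA, if_pos (show 4*i+2*b < 4*k by omega), show (4*i+2*b)/4 = i by omega,
      show (4*i+2*b) % 2 = 0 by omega, show (4*i+2*b) % 4 = 2*b by omega]
    split_ifs <;> norm_num at * <;> omega
  simp only [rowPayoff, hA, add_mul, ite_mul, one_mul, zero_mul, sum_add_distrib, sum_ite_eq',
    mem_range]
  rw [if_pos (by omega), if_pos (by omega)]

lemma rowPayoff_dcsA_four_mul_add_one (h2k : 2*k ≤ nc) (hi : i < k) (hb : b < 2)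
    (y : ℕ → ℝ) :
    rowPayoff (3*k+nc) (dcsA k A) y (4*i+2*b+1) = y (5*i+1) + y (5*i+2) + y (5*i+3+b) := by
  have hA : ∀ j, dcsA k A (4*i+2*b+1) j = (if j = 5*i+1 then 1 else 0) +
      (if j = 5*i+2 then 1 else 0) + (if j = 5*i+3+b then 1 else 0) := by
    intro j
    simp only [dcsA, if_pos (show 4*i+2*b+1 < 4*k by omega), show (4*i+2*b+1)/4 = i by omega,
      show (4*i+2*b+1) % 2 = 1 by omega, show (4*i+2*b+1) % 4 = 2*b+1 by omega]
    split_ifs <;> norm_num at * <;> omega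
  simp only [rowPayoff, hA, add_mul, ite_mul, one_mul, zero_mul, sum_add_distrib, sum_ite_eq',
    mem_range]
  rw [if_pos (by omega), if_pos (by omega), if_pos (by omega)]

end DualColumnSimulation

namespace IsWSNE

variable {nr nc k : ℕ} {A B : ℕ → ℕ → ℝ} {x y : ℕ → ℝ} {ε : ℝ} {i : ℕ}

lemma dcs_sum_sub_le (h : IsWSNE (4*k+nr) (3*k+nc) (dcsA k A) (dcsB k B) x y ε)
    (h2k : 2*k ≤ nc)
    (hsupp : ∀ j < 3*k+nc, 0 < y j → 0 < colPayoff (4*k+nr) (dcsB k B) x j) (hi : i < k) :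
    y (5*i+1) + y (5*i+2) - ε ≤ y (5*i) := by
  have of_pos : ∀ b < 2, 0 < y (5*i+1+b) → y (5*i+1) + y (5*i+2) - ε ≤ y (5*i) := by
    intro b hb hy
    have hx : 0 < x (4*i+2*b) := by
      simpa only [colPayoff_dcsB_five_mul_add_one hi hb] using hsupp _ (by omega) hy
    have := h.rowPayoff_sub_le (by omega) hx (i' := 4*i+2*b+1) (by omega)
    rw [rowPayoff_dcsA_four_mul h2k hi hb, rowPayoff_dcsA_four_mul_add_one h2k hi hb] at this
    linarith
  rcases (h.y_nonneg (5*i+1)).lt_or_eq with h1 | h1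
  · exact of_pos 0 (by norm_num) h1
  rcases (h.y_nonneg (5*i+2)).lt_or_eq with h2 | h2
  · exact of_pos 1 (by norm_num) h2
  linarith [h.y_nonneg (5*i), h.eps_nonneg]

lemma dcs_le_sum_add (h : IsWSNE (4*k+nr) (3*k+nc) (dcsA k A) (dcsB k B) x y ε)
    (h2k : 2*k ≤ nc)
    (hsupp : ∀ j < 3*k+nc, 0 < y j → 0 < colPayoff (4*k+nr) (dcsB k B) x j) (hi : i < k) :
    y (5*i) ≤ y (5*i+1) + y (5*i+2) + ε := by
  have of_pos : ∀ b < 2, 0 < x (4*i+2*b+1) → y (5*i) ≤ y (5*i+1) + y (5*i+2) + ε := by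
    intro b hb hx
    have := h.rowPayoff_sub_le (by omega) hx (i' := 4*i+2*b) (by omega)
    rw [rowPayoff_dcsA_four_mul h2k hi hb, rowPayoff_dcsA_four_mul_add_one h2k hi hb] at this
    linarith
  rcases (h.y_nonneg (5*i)).lt_or_eq with h0 | h0
  · have hx : 0 < x (4*i+1) + x (4*i+3) := by
      simpa only [colPayoff_dcsB_five_mul hi] using hsupp _ (by omega) h0
    rcases (h.x_nonneg (4*i+1)).lt_or_eq with h1 | h1
    · exact of_pos 0 (by norm_num) h1
    · exact of_pos 1 (by norm_num) (by linarith)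
  linarith [h.y_nonneg (5*i+1), h.y_nonneg (5*i+2), h.eps_nonneg]

end IsWSNE

theorem stmt16_general (n nr nc k : ℕ) (ε : ℝ) (A B : ℕ → ℕ → ℝ) (xstar ystar : ℕ → ℝ)
    (hin : DcsInput n nr nc k A B)
    (hε : ε < 1 / (5 * (n:ℝ)))
    (hwsne : IsWSNE (4*k+nr) (3*k+nc) (dcsA k A) (dcsB k B) xstar ystar ε) :
    ∀ i < k,
      0 < ystar (5*i) + ystar (5*i+1) + ystar (5*i+2) →
      0 < xstar (4*i) + xstar (4*i+1) + xstar (4*i+2) + xstar (4*i+3) →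
      ystar (5*i+1) + ystar (5*i+2) - ε ≤ ystar (5*i) ∧
      ystar (5*i) ≤ ystar (5*i+1) + ystar (5*i+2) + ε := by
  obtain ⟨-, hnc, -, h2k, -, -, hB, -, -, hBrow, -⟩ := hin
  have hB₀ : ∀ r < nr, ∀ c < nc, 0 ≤ B r c := fun r hr c hc => (hB r hr c hc).1
  have hcols : ((3*k+nc : ℕ) : ℝ) * ε < 1 :=
    mul_lt_one_of_le_of_lt_one_div (Nat.cast_nonneg _) (by norm_cast; omega) hε
  have hsupp : ∀ j < 3*k+nc, 0 < ystar j → 0 < colPayoff (4*k+nr) (dcsB k B) xstar j :=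
    fun j hj hy => hwsne.colPayoff_pos (fun r hr => one_le_sum_dcsB h2k hB₀ hBrow hr) hcols hj hy
  intro i hi _ _
  exact ⟨hwsne.dcs_sum_sub_le h2k hsupp hi, hwsne.dcs_le_sum_add h2k hsupp hi⟩

/-- If `0 ≤ ε < 1/(5n)` and `(x*, y*)` is an `ε`-WSNE of `(A', B')`, then for every
row `i < k` of `A`: if `P(cb₁ⁱ) > 0` and `P(rb₁ⁱ) + P(rb₂ⁱ) > 0`, then
`y*_{5i+1} + y*_{5i+2} - ε ≤ y*_{5i} ≤ y*_{5i+1} + y*_{5i+2} + ε`. -/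
theorem stmt16 (n nr nc k : ℕ) (ε : ℝ) (A B : ℕ → ℕ → ℝ) (xstar ystar : ℕ → ℝ)
    (hin : DcsInput n nr nc k A B)
    (hε0 : 0 ≤ ε) (hε : ε < 1 / (5 * (n:ℝ)))
    (hwsne : IsWSNE (4*k+nr) (3*k+nc) (dcsA k A) (dcsB k B) xstar ystar ε) :
    ∀ i < k,
      0 < ystar (5*i) + ystar (5*i+1) + ystar (5*i+2) →
      0 < xstar (4*i) + xstar (4*i+1) + xstar (4*i+2) + xstar (4*i+3) →
      ystar (5*i+1) + ystar (5*i+2) - ε ≤ ystar (5*i) ∧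
      ystar (5*i) ≤ ystar (5*i+1) + ystar (5*i+2) + ε :=
  stmt16_general n nr nc k ε A B xstar ystar hin hε hwsne
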